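/- arXiv:2203.01530 — 3 statements merged into one kernel-verified Lean document; each statement's English description precedes it below -/
import Mathlib

section
/- If G is a signed graph whose spectral radius (the maximum absolute value of eigenvalues of its signed adjacency matrix) is at most sqrt(2+sqrt(5)), then every vertex of G has degree at most 4. -/
open Matrix

/-- The spectral radius of a real square matrix: the supremum of absolute values of its
(real) eigenvalues. -/
noncomputable def specRad {n : ℕ} (A : Matrix (Fin n) (Fin n) ℝ) : ℝ :=
  sSup {r : ℝ | ∃ μ : ℝ, Module.End.HasEigenvalue (Matrix.toLin' A) μ ∧ r = |μ|}

lemma eigSet_bddAbove {n : ℕ} (A : Matrix (Fin n) (Fin n) ℝ) :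
    BddAbove {r : ℝ | ∃ μ : ℝ, Module.End.HasEigenvalue (Matrix.toLin' A) μ ∧ r = |μ|} := by
  have hfin : (Set.Finite {μ : ℝ | Module.End.HasEigenvalue (Matrix.toLin' A) μ}) := by
    have hI : IsIntegral ℝ (Matrix.toLin' A) := Algebra.IsIntegral.isIntegral _
    have h0 : minpoly ℝ (Matrix.toLin' A) ≠ 0 := minpoly.ne_zero hI
    refine (Polynomial.finite_setOf_isRoot h0).subset ?_
    intro μ hμ
    exact (Module.End.hasEigenvalue_iff_isRoot).1 hμ
  have : {r : ℝ | ∃ μ : ℝ, Module.End.HasEigenvalue (Matrix.toLin' A) μ ∧ r = |μ|}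
      ⊆ abs '' {μ : ℝ | Module.End.HasEigenvalue (Matrix.toLin' A) μ} := by
    rintro r ⟨μ, hμ, rfl⟩; exact ⟨μ, hμ, rfl⟩
  exact ((hfin.image _).subset this).bddAbove

/-- If a signed graph (given by its symmetric adjacency matrix with entries in {-1,0,1}
and zero diagonal) has spectral radius at most √(2+√5), then every vertex has degree
at most 4. -/
theorem signedGraph_specRad_le_implies_maxDegree_le_four
    {n : ℕ} (A : Matrix (Fin n) (Fin n) ℝ)
    (hsym : A.IsSymm)
    (hentries : ∀ i j, A i j = 0 ∨ A i j = 1 ∨ A i j = -1)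
    (hdiag : ∀ i, A i i = 0)
    (hρ : specRad A ≤ Real.sqrt (2 + Real.sqrt 5)) (i : Fin n) :
    (Finset.univ.filter (fun j => A i j ≠ 0)).card ≤ 4 := by
  by_contra hcard
  push_neg at hcard
  have hd5 : (5 : ℝ) ≤ ((Finset.univ.filter (fun j => A i j ≠ 0)).card : ℝ) := by
    exact_mod_cast hcard
  have hAH : A.IsHermitian := by
    rw [Matrix.IsHermitian, Matrix.conjTranspose_eq_transpose_of_trivial]
    exact hsym
  have hA2H : (A * A).IsHermitian := by
    have := Matrix.isHermitian_mul_conjTranspose_self A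
    rwa [hAH.eq] at this
  set T : EuclideanSpace ℝ (Fin n) →ₗ[ℝ] EuclideanSpace ℝ (Fin n) :=
    Matrix.toEuclideanLin (A * A) with hT
  have hTsym : T.IsSymmetric := Matrix.isHermitian_iff_isSymmetric.1 hA2H
  haveI : Nonempty (Fin n) := ⟨i⟩
  haveI : Nontrivial (EuclideanSpace ℝ (Fin n)) := by
    unfold EuclideanSpace; infer_instance
  have heig := hTsym.hasEigenvalue_iSup_of_finiteDimensional
  set ν : ℝ := (⨆ x : { x : EuclideanSpace ℝ (Fin n) // x ≠ 0 },
      RCLike.re (inner ℝ (T x) (x : EuclideanSpace ℝ (Fin n)) : ℝ) / ‖(x : EuclideanSpace ℝ (Fin n))‖ ^ 2) with hν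
  have hbdd : BddAbove (Set.range fun x : { x : EuclideanSpace ℝ (Fin n) // x ≠ 0 } =>
      RCLike.re (inner ℝ (T x) (x : EuclideanSpace ℝ (Fin n)) : ℝ) / ‖(x : EuclideanSpace ℝ (Fin n))‖ ^ 2) := by
    refine ⟨‖LinearMap.toContinuousLinearMap T‖, ?_⟩
    rintro r ⟨x, rfl⟩
    have hx : (0:ℝ) < ‖(x : EuclideanSpace ℝ (Fin n))‖ ^ 2 := by
      have := norm_pos_iff.2 x.2
      positivity
    rw [div_le_iff₀ hx]
    calc RCLike.re (inner ℝ (T x) (x : EuclideanSpace ℝ (Fin n)) : ℝ)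
        ≤ ‖T x‖ * ‖(x : EuclideanSpace ℝ (Fin n))‖ := by
          simp only [RCLike.re_to_real]
          exact real_inner_le_norm _ _
      _ ≤ (‖LinearMap.toContinuousLinearMap T‖ * ‖(x : EuclideanSpace ℝ (Fin n))‖) * ‖(x : EuclideanSpace ℝ (Fin n))‖ := by
          have := (LinearMap.toContinuousLinearMap T).le_opNorm (x : EuclideanSpace ℝ (Fin n))
          exact mul_le_mul_of_nonneg_right this (norm_nonneg _)
      _ = ‖LinearMap.toContinuousLinearMap T‖ * ‖(x : EuclideanSpace ℝ (Fin n))‖ ^ 2 := by ring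
  -- the Rayleigh quotient at e_i is the degree
  have hesingle : (EuclideanSpace.single i (1:ℝ)) ≠ 0 := by
    intro h
    have : (EuclideanSpace.single i (1:ℝ)) i = (0 : EuclideanSpace ℝ (Fin n)) i := by rw [h]
    rw [EuclideanSpace.single_apply] at this
    simp at this
  have hval : RCLike.re (inner ℝ (T (EuclideanSpace.single i 1)) (EuclideanSpace.single i (1:ℝ)) : ℝ)
      / ‖EuclideanSpace.single i (1:ℝ)‖ ^ 2
      = ((Finset.univ.filter (fun j => A i j ≠ 0)).card : ℝ) := by
    have hnorm : ‖EuclideanSpace.single i (1:ℝ)‖ = 1 := by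
      rw [EuclideanSpace.norm_single]; norm_num
    have happ : ∀ j, (T (EuclideanSpace.single i 1)) j = (A * A) j i := by
      intro j
      have h1 := congrFun (Matrix.ofLp_toEuclideanLin_apply (A*A) (EuclideanSpace.single i 1)) j
      have h2 : WithLp.ofLp (EuclideanSpace.single i (1:ℝ)) = Pi.single i 1 :=
        EuclideanSpace.ofLp_single i 1
      rw [h2, Matrix.mulVec_single] at h1
      exact h1.trans (by simp)
    have hinner : (inner ℝ (T (EuclideanSpace.single i 1)) (EuclideanSpace.single i (1:ℝ)) : ℝ)
        = (A * A) i i := by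
      rw [EuclideanSpace.inner_single_right]
      simp [happ i]
    rw [hinner, hnorm]
    simp only [RCLike.re_to_real, one_pow, div_one]
    rw [Matrix.mul_apply]
    have hterm : ∀ k, A i k * A k i = if A i k ≠ 0 then 1 else 0 := by
      intro k
      have hs : A k i = A i k := congrFun (congrFun hsym i) k
      rw [hs]
      rcases hentries i k with h | h | h <;> simp [h]
    rw [Finset.sum_congr rfl (fun k _ => hterm k)]
    rw [Finset.sum_boole]
  -- ν is at least the degree
  have hν5 : (5:ℝ) ≤ ν := by
    refine le_trans hd5 ?_
    rw [← hval, hν]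
    exact le_ciSup hbdd ⟨EuclideanSpace.single i 1, hesingle⟩
  have hν0 : (0:ℝ) ≤ ν := by linarith
  -- extract an eigenvector of T = A*A
  have heig' : Module.End.HasEigenvalue T ν := by
    simpa using heig
  obtain ⟨v, hv⟩ := heig'.exists_hasEigenvector
  have hvne : v ≠ 0 := hv.2
  have hvT : T v = ν • v := Module.End.mem_eigenspace_iff.1 hv.1
  -- transfer to mulVec
  set u : Fin n → ℝ := (WithLp.equiv 2 (Fin n → ℝ)) v with hu
  have hune : u ≠ 0 := by
    intro h
    apply hvne
    have := congrArg (WithLp.equiv 2 (Fin n → ℝ)).symm h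
    simpa [hu] using this
  have huA2 : (A * A).mulVec u = ν • u := by
    have h1 := Matrix.ofLp_toEuclideanLin_apply (A * A) v
    rw [hvT] at h1
    rw [hu]
    rw [show (A * A).mulVec ((WithLp.equiv 2 (Fin n → ℝ)) v) = (A * A) *ᵥ WithLp.ofLp v from rfl]
    rw [← h1]
    simp
  set s : ℝ := Real.sqrt ν with hsdef
  have hs0 : 0 ≤ s := Real.sqrt_nonneg _
  have hs2 : s * s = ν := Real.mul_self_sqrt hν0
  -- produce an eigenvalue of A of absolute value s
  have hμ : ∃ μ : ℝ, Module.End.HasEigenvalue (Matrix.toLin' A) μ ∧ |μ| = s := by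
    by_cases hw : A.mulVec u + s • u = 0
    · refine ⟨-s, ?_, by rw [abs_neg, abs_of_nonneg hs0]⟩
      refine Module.End.hasEigenvalue_of_hasEigenvector
        (⟨Module.End.mem_eigenspace_iff.2 ?_, hune⟩ :
          Module.End.HasEigenvector (Matrix.toLin' A) (-s) u)
      rw [Matrix.toLin'_apply]
      have : A.mulVec u = -(s • u) := by
        rw [← sub_eq_zero]; rw [sub_neg_eq_add]; exact hw
      rw [this, neg_smul]
    · refine ⟨s, ?_, abs_of_nonneg hs0⟩
      refine Module.End.hasEigenvalue_of_hasEigenvector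
        (⟨Module.End.mem_eigenspace_iff.2 ?_, hw⟩ :
          Module.End.HasEigenvector (Matrix.toLin' A) s (A.mulVec u + s • u))
      rw [Matrix.toLin'_apply]
      rw [Matrix.mulVec_add, Matrix.mulVec_smul, Matrix.mulVec_mulVec, huA2]
      rw [smul_add, smul_smul, hs2]
      exact add_comm _ _
  obtain ⟨μ, hμeig, hμabs⟩ := hμ
  have hsmem : s ∈ {r : ℝ | ∃ μ : ℝ, Module.End.HasEigenvalue (Matrix.toLin' A) μ ∧ r = |μ|} :=
    ⟨μ, hμeig, hμabs.symm⟩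
  have hsle : s ≤ specRad A := le_csSup (eigSet_bddAbove A) hsmem
  -- numeric contradiction
  have h1 : Real.sqrt (2 + Real.sqrt 5) < Real.sqrt 5 := by
    apply Real.sqrt_lt_sqrt (by positivity)
    nlinarith [Real.sq_sqrt (by norm_num : (0:ℝ) ≤ 5), Real.sqrt_nonneg 5,
      Real.sqrt_lt' (x := 5) (y := 3) (by norm_num)]
  have h2 : Real.sqrt 5 ≤ s := Real.sqrt_le_sqrt hν5
  linarith
end

section
/- Let A = [[A₁, B],[Bᵀ, A₂]] be a real symmetric matrix in block form whose only eigenvalues are ±2, so that BᵀA₁ + A₂Bᵀ = 0. If μ ≠ ±2 is an eigenvalue of A₁, then −μ is an eigenvalue of A₂. -/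
open Matrix

/-- Let `A = [[A₁, B],[Bᵀ, A₂]]` be a real symmetric matrix in block form whose only
eigenvalues are ±2. If `μ ≠ ±2` is an eigenvalue of `A₁`, then `−μ` is an eigenvalue
of `A₂`. -/
theorem eigenvalue_transfer_between_blocks
    {p q : ℕ}
    (A₁ : Matrix (Fin p) (Fin p) ℝ) (A₂ : Matrix (Fin q) (Fin q) ℝ)
    (B : Matrix (Fin p) (Fin q) ℝ)
    (h1 : A₁.IsSymm) (h2 : A₂.IsSymm)
    (hspec : ∀ μ : ℝ,
      Module.End.HasEigenvalue (Matrix.toLin' (Matrix.fromBlocks A₁ B Bᵀ A₂)) μ →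
        μ = 2 ∨ μ = -2)
    (μ : ℝ) (hμ2 : μ ≠ 2) (hμm2 : μ ≠ -2)
    (hμ : ∃ β : Fin p → ℝ, β ≠ 0 ∧ A₁.mulVec β = μ • β) :
    ∃ γ : Fin q → ℝ, γ ≠ 0 ∧ A₂.mulVec γ = (-μ) • γ := by
  obtain ⟨β, hβ0, hβ⟩ := hμ
  set M : Matrix (Fin p ⊕ Fin q) (Fin p ⊕ Fin q) ℝ := Matrix.fromBlocks A₁ B Bᵀ A₂ with hMdef
  have hM : M.IsHermitian := by
    rw [Matrix.IsHermitian, Matrix.conjTranspose_eq_transpose_of_trivial, hMdef,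
      Matrix.fromBlocks_transpose, h1.eq, h2.eq, Matrix.transpose_transpose]
  -- every eigenvalue of M squares to 4
  have hev : ∀ i, hM.eigenvalues i * hM.eigenvalues i = 4 := by
    intro i
    have h := hM.mulVec_eigenvectorBasis i
    have hne : ⇑(hM.eigenvectorBasis i) ≠ 0 := by
      have := hM.eigenvectorBasis.orthonormal.ne_zero i
      intro hc
      exact this (by ext j; exact congrFun hc j)
    have : Module.End.HasEigenvalue (Matrix.toLin' M) (hM.eigenvalues i) := by
      refine Module.End.hasEigenvalue_of_hasEigenvector ⟨?_, hne⟩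
      rw [Module.End.mem_eigenspace_iff, Matrix.toLin'_apply, h]
    rcases hspec _ this with h4 | h4 <;> rw [h4] <;> norm_num
  -- M * M = 4 • 1
  have hMM : M * M = (4 : ℝ) • 1 := by
    have hs := hM.spectral_theorem
    set U : Matrix (Fin p ⊕ Fin q) (Fin p ⊕ Fin q) ℝ := (hM.eigenvectorUnitary : Matrix (Fin p ⊕ Fin q) (Fin p ⊕ Fin q) ℝ)
    have hsU : star U * U = 1 := Unitary.coe_star_mul_self hM.eigenvectorUnitary
    have hUs : U * star U = 1 := Unitary.coe_mul_star_self hM.eigenvectorUnitary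
    set D := (Matrix.diagonal (RCLike.ofReal ∘ hM.eigenvalues) : Matrix (Fin p ⊕ Fin q) (Fin p ⊕ Fin q) ℝ) with hDdef
    have hD : D * D = (4 : ℝ) • 1 := by
      rw [hDdef, Matrix.diagonal_mul_diagonal]
      have hfun : (fun i => (RCLike.ofReal ∘ hM.eigenvalues) i * (RCLike.ofReal ∘ hM.eigenvalues) i)
          = fun _ : Fin p ⊕ Fin q => (4 : ℝ) := by
        funext i; simpa using hev i
      rw [hfun, ← Matrix.smul_one_eq_diagonal]
    rw [hs, Unitary.conjStarAlgAut_apply]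
    simp only [← Matrix.mul_assoc]
    rw [Matrix.mul_assoc (U * D) (star U) U, hsU, Matrix.mul_one, Matrix.mul_assoc U D D, hD,
      Matrix.mul_smul, Matrix.mul_one, Matrix.smul_mul, hUs]
  -- the candidate eigenvector
  set γ : Fin q → ℝ := Bᵀ.mulVec β with hγdef
  have hMv : M.mulVec (Sum.elim β 0) = Sum.elim (μ • β) γ := by
    rw [hMdef, Matrix.fromBlocks_mulVec]
    simp [hβ, hγdef]
  have hγ0 : γ ≠ 0 := by
    intro hc
    have hvne : (Sum.elim β 0 : Fin p ⊕ Fin q → ℝ) ≠ 0 := by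
      intro h
      exact hβ0 (by ext i; exact congrFun h (Sum.inl i))
    have : Module.End.HasEigenvalue (Matrix.toLin' M) μ := by
      refine Module.End.hasEigenvalue_of_hasEigenvector ⟨?_, hvne⟩
      rw [Module.End.mem_eigenspace_iff, Matrix.toLin'_apply, hMv, hc]
      ext (i | j) <;> simp
    rcases hspec _ this with h | h
    · exact hμ2 h
    · exact hμm2 h
  refine ⟨γ, hγ0, ?_⟩
  have h2v : M.mulVec (M.mulVec (Sum.elim β 0)) = (4 : ℝ) • Sum.elim β 0 := by
    rw [Matrix.mulVec_mulVec, hMM, Matrix.smul_mulVec, Matrix.one_mulVec]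
  rw [hMv, hMdef, Matrix.fromBlocks_mulVec] at h2v
  have hbot := congrFun h2v
  ext i
  have h := hbot (Sum.inr i)
  simp [Matrix.mulVec_smul] at h
  have : μ * γ i + A₂.mulVec γ i = 0 := h
  simp only [Pi.smul_apply, smul_eq_mul]
  linarith
end

section
/- Let G be a signed graph, v a vertex of G. Then the characteristic polynomial satisfies φ_G(x) = x·φ_{G−v}(x) − Σ_{vu ∈ E(G)} φ_{G−v−u}(x) − 2·Σ_{C ∈ C(v)} σ(C)·φ_{G−C}(x), where C(v) is the set of cycles through v, σ(C) is the product of edge signs along C, and G−C is G with the vertices of C deleted. -/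
open Polynomial

/-- A signed graph: a simple graph together with a symmetric sign function which is
`±1` on every edge. -/
structure SignedGraph (V : Type*) where
  G : SimpleGraph V
  sign : V → V → ℝ
  sign_symm : ∀ u v, sign u v = sign v u
  sign_pm : ∀ u v, G.Adj u v → sign u v = 1 ∨ sign u v = -1

variable {V : Type*} [Fintype V] [DecidableEq V]

/-- The signed adjacency matrix of the induced subgraph `Γ − S` obtained by deleting the
vertices of the finset `S`. -/
def SignedGraph.adjOn (Γ : SignedGraph V) [DecidableRel Γ.G.Adj] (S : Finset V) :
    Matrix {u : V // u ∉ S} {u : V // u ∉ S} ℝ :=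
  Matrix.of fun i j => if Γ.G.Adj i.val j.val then Γ.sign i.val j.val else 0

/-- The characteristic polynomial `φ_{Γ−S}(x) = det(xI − A(Γ−S))`. -/
noncomputable def SignedGraph.phi (Γ : SignedGraph V) [DecidableRel Γ.G.Adj]
    (S : Finset V) : Polynomial ℝ :=
  (Γ.adjOn S).charpoly

/-- The sign of a walk: the product of the signs of its edges. -/
def SignedGraph.walkSign (Γ : SignedGraph V) {u v : V} (w : Γ.G.Walk u v) : ℝ :=
  (w.darts.map fun d => Γ.sign d.toProd.1 d.toProd.2).prod

/-- The closed walks at `v` that are cycles form a fintype (their length is bounded by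
the number of vertices). -/
noncomputable instance SignedGraph.cycleFintype (Γ : SignedGraph V)
    [DecidableRel Γ.G.Adj] (v : V) : Fintype {w : Γ.G.Walk v v // w.IsCycle} :=
  Fintype.ofInjective
    (fun w => (⟨w.1, by
      have h1 : w.1.support.length = w.1.length + 1 := SimpleGraph.Walk.length_support w.1
      have h2 : w.1.support.tail.Nodup := w.2.support_nodup
      have h3 : w.1.support.tail.length ≤ Fintype.card V := List.Nodup.length_le_card h2
      have h4 : w.1.support.tail.length = w.1.length := by
        have : w.1.support.tail.length = w.1.support.length - 1 := List.length_tail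
        omega
      omega⟩ : {p : Γ.G.Walk v v // p.length < Fintype.card V + 1}))
    (fun a b h => Subtype.ext (by simpa using congrArg Subtype.val h))


section DetExpansion

open Finset Equiv Equiv.Perm
open scoped Classical

variable {V : Type*} [Fintype V] [DecidableEq V] {R : Type*} [CommRing R]


private def vset (v : V) (c : Perm V) : Finset V := insert v c.support

private lemma mem_vset_cycleOf (σ : Perm V) (v x : V) :
    x ∈ vset v (σ.cycleOf v) ↔ σ.SameCycle v x := by
  rcases eq_or_ne (σ v) v with h | h
  · rw [vset, (cycleOf_eq_one_iff σ).mpr h]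
    simp only [support_one, LawfulSingleton.insert_empty_eq, mem_singleton]
    constructor
    · rintro rfl; exact SameCycle.refl _ _
    · rintro ⟨k, hk⟩
      rw [zpow_apply_eq_self_of_apply_eq_self h] at hk; exact hk.symm
  · rw [vset, mem_insert, mem_support_cycleOf_iff]
    constructor
    · rintro (rfl | ⟨h1, _⟩)
      · exact SameCycle.refl _ _
      · exact h1
    · intro h1; exact Or.inr ⟨h1, mem_support.mpr h⟩

private def cterm (N : Matrix V V R) (v : V) (c : Perm V) : R :=
  ((Equiv.Perm.sign c : ℤ) : R) * (∏ i ∈ vset v c, N (c i) i) *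
    (N.submatrix (Subtype.val : {x : V // x ∉ vset v c} → V) Subtype.val).det

private lemma fiber_sum (N : Matrix V V R) (v : V) (c : Perm V)
    (hc : c = 1 ∨ (c.IsCycle ∧ c v ≠ v)) :
    ∑ σ ∈ univ.filter (fun σ : Perm V => σ.cycleOf v = c),
      ((Equiv.Perm.sign σ : ℤ) : R) * ∏ i, N (σ i) i = cterm N v c := by
  have hv : v ∈ vset v c := mem_insert_self _ _
  have hfix : ∀ x, x ∉ vset v c → c x = x := fun x hx =>
    notMem_support.mp (fun hs => hx (mem_insert_of_mem hs))
  have hcyc : c.cycleOf v = c := by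
    rcases hc with rfl | ⟨h1, h2⟩
    · simp
    · exact h1.cycleOf_eq h2
  have hinv : ∀ σ : Perm V, σ.cycleOf v = c → ∀ x : V, σ x ∉ vset v c ↔ x ∉ vset v c := by
    intro σ hσ x
    rw [← hσ, not_iff_not, mem_vset_cycleOf, mem_vset_cycleOf]
    exact sameCycle_apply_right
  have hdisj : ∀ τ : Perm {x : V // x ∉ vset v c},
      Equiv.Perm.Disjoint c (Equiv.Perm.ofSubtype τ) := by
    intro τ x
    by_cases hx : x ∈ vset v c
    · exact Or.inr (Equiv.Perm.ofSubtype_apply_of_not_mem τ (not_not_intro hx))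
    · exact Or.inl (hfix x hx)
  have key : ∀ τ : Perm {x : V // x ∉ vset v c},
      (c * Equiv.Perm.ofSubtype τ).cycleOf v = c := fun τ => by
    rw [cycleOf_mul_of_apply_right_eq_self (hdisj τ).commute _
      (Equiv.Perm.ofSubtype_apply_of_not_mem τ (not_not_intro hv)), hcyc]
  have left_inv : ∀ (σ : Perm V) (hσ' : σ.cycleOf v = c),
      c * Equiv.Perm.ofSubtype (σ.subtypePerm (p := fun y => y ∉ vset v c) (hinv σ hσ')) = σ := by
    intro σ hσ'
    ext x
    by_cases hx : x ∈ vset v c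
    · rw [Perm.mul_apply, Equiv.Perm.ofSubtype_apply_of_not_mem (p := fun y => y ∉ vset v c) _ (not_not_intro hx)]
      have hs : σ.SameCycle v x := (mem_vset_cycleOf σ v x).mp (by rwa [hσ'])
      rw [← hσ', hs.cycleOf_apply]
    · rw [Perm.mul_apply, Equiv.Perm.ofSubtype_apply_of_mem (p := fun y => y ∉ vset v c) _ hx]
      simp only [Equiv.Perm.subtypePerm_apply]
      exact hfix _ ((hinv σ hσ' x).mpr hx)
  have right_inv : ∀ τ : Perm {x : V // x ∉ vset v c},
      ∀ (pf : ∀ x : V, (c * Equiv.Perm.ofSubtype τ) x ∉ vset v c ↔ x ∉ vset v c),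
      (c * Equiv.Perm.ofSubtype τ).subtypePerm (p := fun y => y ∉ vset v c) pf = τ := by
    intro τ pf
    ext x
    simp only [Equiv.Perm.subtypePerm_apply, Perm.mul_apply]
    rw [Equiv.Perm.ofSubtype_apply_of_mem (p := fun y => y ∉ vset v c) _ x.2]
    exact congrArg Subtype.val (congrArg τ (Subtype.ext rfl)) ▸ hfix _ (τ x).2
  have hstep : ∀ τ : Perm {x : V // x ∉ vset v c},
      ((Equiv.Perm.sign (c * Equiv.Perm.ofSubtype τ) : ℤ) : R)
        * ∏ i, N ((c * Equiv.Perm.ofSubtype τ) i) i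
      = (((Equiv.Perm.sign c : ℤ) : R) * ∏ i ∈ vset v c, N (c i) i)
        * (((Equiv.Perm.sign τ : ℤ) : R)
            * ∏ j : {x : V // x ∉ vset v c}, N ((τ j : {x : V // x ∉ vset v c}) : V) (j : V)) := by
    intro τ
    have h1 : ∀ i ∈ vset v c, N ((c * Equiv.Perm.ofSubtype τ) i) i = N (c i) i := by
      intro i hi
      rw [Perm.mul_apply, Equiv.Perm.ofSubtype_apply_of_not_mem (p := fun y => y ∉ vset v c) τ (not_not_intro hi)]
    have h2 : ∀ i ∈ (vset v c)ᶜ, N ((c * Equiv.Perm.ofSubtype τ) i) i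
        = N (Equiv.Perm.ofSubtype τ i) i := by
      intro i hi
      rw [Finset.mem_compl] at hi
      have hm : Equiv.Perm.ofSubtype τ i ∉ vset v c := by
        rw [Equiv.Perm.ofSubtype_apply_of_mem (p := fun y => y ∉ vset v c) τ hi]; exact (τ ⟨i, hi⟩).2
      rw [Perm.mul_apply, hfix _ hm]
    have h3 : ∏ i ∈ (vset v c)ᶜ, N (Equiv.Perm.ofSubtype τ i) i
        = ∏ j : {x : V // x ∉ vset v c}, N ((τ j : {x : V // x ∉ vset v c}) : V) (j : V) := by
      rw [Finset.prod_subtype ((vset v c)ᶜ) (fun x => Finset.mem_compl)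
        (fun i => N (Equiv.Perm.ofSubtype τ i) i)]
      exact Finset.prod_congr rfl fun j _ => by rw [Equiv.Perm.ofSubtype_apply_coe]
    rw [← Finset.prod_mul_prod_compl (vset v c)
        (fun i => N ((c * Equiv.Perm.ofSubtype τ) i) i),
      Finset.prod_congr rfl h1, Finset.prod_congr rfl h2, h3, map_mul, sign_ofSubtype]
    push_cast
    ring
  have hbij : ∑ σ ∈ univ.filter (fun σ : Perm V => σ.cycleOf v = c),
      ((Equiv.Perm.sign σ : ℤ) : R) * ∏ i, N (σ i) i
      = ∑ τ : Perm {x : V // x ∉ vset v c},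
        ((Equiv.Perm.sign (c * Equiv.Perm.ofSubtype τ) : ℤ) : R)
          * ∏ i, N ((c * Equiv.Perm.ofSubtype τ) i) i := by
    refine Finset.sum_bij'
      (i := fun σ hσ => σ.subtypePerm (p := fun y => y ∉ vset v c) (hinv σ (mem_filter.mp hσ).2))
      (j := fun τ _ => c * Equiv.Perm.ofSubtype τ)
      (fun _ _ => mem_univ _)
      (fun τ _ => mem_filter.mpr ⟨mem_univ _, key τ⟩)
      (fun σ hσ => left_inv σ (mem_filter.mp hσ).2)
      (fun τ _ => right_inv τ _)
      (fun σ hσ => ?_)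
    exact (congrArg (fun ρ : Perm V => ((Equiv.Perm.sign ρ : ℤ) : R) * ∏ i, N (ρ i) i)
      (left_inv σ (mem_filter.mp hσ).2)).symm
  rw [hbij, Finset.sum_congr rfl (fun τ _ => hstep τ), ← Finset.mul_sum, cterm,
    Matrix.det_apply']
  simp only [Matrix.submatrix_apply]

private lemma det_expansion (N : Matrix V V R) (v : V) :
    N.det = ∑ c ∈ univ.filter (fun c : Perm V => c = 1 ∨ (c.IsCycle ∧ c v ≠ v)),
      cterm N v c := by
  rw [Matrix.det_apply']
  rw [← Finset.sum_fiberwise_of_maps_to (g := fun σ : Perm V => σ.cycleOf v)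
      (t := univ.filter (fun c : Perm V => c = 1 ∨ (c.IsCycle ∧ c v ≠ v)))
      (fun σ _ => by
        rcases eq_or_ne (σ v) v with h | h
        · exact mem_filter.mpr ⟨mem_univ _, Or.inl ((cycleOf_eq_one_iff σ).mpr h)⟩
        · exact mem_filter.mpr ⟨mem_univ _, Or.inr ⟨isCycle_cycleOf σ h,
            by rwa [cycleOf_apply_self]⟩⟩) _]
  exact Finset.sum_congr rfl fun c hc => fiber_sum N v c (mem_filter.mp hc).2

end DetExpansion

section WalkAux

open SimpleGraph

variable {V : Type*} {G : SimpleGraph V}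

private lemma walk_eq_of_support_eq [DecidableEq V] :
    ∀ {u x : V} (p q : G.Walk u x), p.support = q.support → p = q := by
  intro u x p
  induction p with
  | nil =>
    intro q h
    cases q with
    | nil => rfl
    | cons h' q' =>
      have := congrArg List.length h
      simp [Walk.support_cons, Walk.length_support] at this
  | cons h' p' ih =>
    intro q hq
    cases q with
    | nil =>
      have := congrArg List.length hq
      simp [Walk.support_cons, Walk.length_support] at this
    | cons h'' q' =>
      simp only [Walk.support_cons, List.cons.injEq, true_and] at hq
      have hhead : p'.support.head (by simp) = q'.support.head (by simp) := by
        congr 1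
      rw [Walk.head_support, Walk.head_support] at hhead
      subst hhead
      rw [ih q' hq]

private lemma exists_walk_of_chain :
    ∀ (l : List V) (hl : l ≠ []) (_ : l.Chain' G.Adj),
    ∃ w : G.Walk (l.head hl) (l.getLast hl), w.support = l := by
  intro l
  induction l with
  | nil => simp
  | cons a t ih =>
    intro _ h
    cases t with
    | nil => exact ⟨Walk.nil, rfl⟩
    | cons b t' =>
      obtain ⟨hab, h2⟩ := List.isChain_cons_cons.mp h
      obtain ⟨w', hw'⟩ := ih (by simp) h2
      rw [List.getLast_cons (by simp : (b :: t') ≠ [])]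
      exact ⟨Walk.cons hab w', congrArg (a :: ·) hw'⟩

private lemma dart_head_structure :
    ∀ {a b : V} (p : G.Walk a b), p.support.Nodup →
      ∀ d : G.Dart, d ∈ p.darts → d.toProd.1 = a →
      ∃ t, p.support = a :: d.toProd.2 :: t := by
  intro a b p
  induction p with
  | nil => intro _ d hd; simp [Walk.darts_nil] at hd
  | @cons u c b h q ih =>
    intro hp d hd hfst
    rw [Walk.darts_cons] at hd
    rcases List.mem_cons.mp hd with rfl | hd'
    · refine ⟨q.support.tail, ?_⟩
      rw [Walk.support_cons]
      congr 1
      exact q.support_eq_cons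
    · exfalso
      have hmem : d.toProd.1 ∈ q.support := Walk.dart_fst_mem_support_of_mem_darts q hd'
      rw [hfst] at hmem
      rw [Walk.support_cons, List.nodup_cons] at hp
      exact hp.1 hmem

end WalkAux

section CycleWalk

open SimpleGraph Equiv Equiv.Perm

variable {V : Type*} [Fintype V] [DecidableEq V] {G : SimpleGraph V} {v : V}

private lemma getElem_idx_congr {α : Type*} (l : List α) {i j : ℕ} (h : i = j)
    (hi : i < l.length) : l[i]'hi = l[j]'(h ▸ hi) := by subst h; rfl

private lemma getElem_list_congr {α : Type*} {l l' : List α} (h : l = l') {i : ℕ}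
    (hi : i < l.length) : l[i]'hi = l'[i]'(h ▸ hi) := by subst h; rfl

private def cycPerm (w : G.Walk v v) : Equiv.Perm V := w.support.dropLast.formPerm

private lemma support_eq_dropLast (w : G.Walk v v) :
    w.support = w.support.dropLast ++ [v] := by
  conv_lhs => rw [← List.dropLast_append_getLast w.support_ne_nil]
  rw [w.getLast_support]

private lemma dropLast_length (w : G.Walk v v) :
    w.support.dropLast.length = w.length := by
  rw [List.length_dropLast, w.length_support]
  omega

private lemma dropLast_nodup {w : G.Walk v v} (hw : w.IsCycle) :
    w.support.dropLast.Nodup := by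
  have ht : w.support.tail.Nodup := hw.2
  have htne : w.support.tail ≠ [] := by
    intro h
    have h3 := hw.three_le_length
    have hls := w.length_support
    have h0 := congrArg List.length h
    rw [List.length_tail] at h0
    simp only [List.length_nil] at h0
    omega
  have hgl : w.support.tail.getLast htne = v := by
    rw [List.getLast_tail, w.getLast_support]
  have hsplit : w.support.tail.dropLast ++ [v] = w.support.tail := by
    conv_rhs => rw [← List.dropLast_append_getLast htne]
    rw [hgl]
  have hnd : (w.support.tail.dropLast ++ [v]).Nodup := by rw [hsplit]; exact ht
  rw [List.nodup_append] at hnd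
  have hdl : w.support.dropLast = v :: w.support.tail.dropLast := by
    conv_lhs => rw [w.support_eq_cons]
    exact List.dropLast_cons_of_ne_nil htne
  rw [hdl, List.nodup_cons]
  exact ⟨fun hv => hnd.2.2 v hv v (by simp) rfl, hnd.1⟩

private lemma dropLast_getElem_zero {w : G.Walk v v} (h : 0 < w.support.dropLast.length) :
    w.support.dropLast[0] = v := by
  rw [List.getElem_dropLast, getElem_list_congr w.support_eq_cons]
  simp

private lemma dropLast_head {w : G.Walk v v} (hne : w.support.dropLast ≠ []) :
    w.support.dropLast.head hne = v := by
  rw [List.head_eq_getElem_zero hne]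
  exact dropLast_getElem_zero (List.length_pos_iff.mpr hne)

private lemma two_le_dropLast {w : G.Walk v v} (hw : w.IsCycle) :
    2 ≤ w.support.dropLast.length := by
  rw [dropLast_length]; have := hw.three_le_length; omega

private lemma cycPerm_isCycle {w : G.Walk v v} (hw : w.IsCycle) :
    (cycPerm w).IsCycle :=
  List.isCycle_formPerm (dropLast_nodup hw) (two_le_dropLast hw)

private lemma mem_dropLast_v {w : G.Walk v v} (hw : w.IsCycle) :
    v ∈ w.support.dropLast := by
  have h2 := two_le_dropLast hw
  have hne : w.support.dropLast ≠ [] := by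
    intro h; rw [h] at h2; simp at h2
  have hm := List.head_mem hne
  rwa [dropLast_head hne] at hm

private lemma cycPerm_moves {w : G.Walk v v} (hw : w.IsCycle) :
    cycPerm w v ≠ v := by
  rw [cycPerm]
  exact (List.formPerm_apply_mem_ne_self_iff _ (dropLast_nodup hw) _
    (mem_dropLast_v hw)).mpr (two_le_dropLast hw)

private lemma cycPerm_support {w : G.Walk v v} (hw : w.IsCycle) :
    (cycPerm w).support = w.support.dropLast.toFinset := by
  refine List.support_formPerm_of_nodup _ (dropLast_nodup hw) ?_
  intro x hx
  have := two_le_dropLast hw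
  rw [hx] at this; simp at this

private lemma cycPerm_toList {w : G.Walk v v} (hw : w.IsCycle) :
    (cycPerm w).toList v = w.support.dropLast := by
  have h2 := two_le_dropLast hw
  have h0 : 0 < w.support.dropLast.length := by omega
  have := Equiv.Perm.toList_formPerm_nontrivial w.support.dropLast h2 (dropLast_nodup hw)
  rwa [List.get_mk_zero h0, dropLast_head] at this

private lemma cycPerm_injective {w w' : G.Walk v v} (hw : w.IsCycle) (hw' : w'.IsCycle)
    (h : cycPerm w = cycPerm w') : w = w' := by
  have h1 : w.support.dropLast = w'.support.dropLast := by
    rw [← cycPerm_toList hw, ← cycPerm_toList hw', h]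
  apply walk_eq_of_support_eq
  rw [support_eq_dropLast w, support_eq_dropLast w', h1]

private lemma cycPerm_dart {w : G.Walk v v} (hw : w.IsCycle) (d : G.Dart)
    (hd : d ∈ w.darts) : cycPerm w d.toProd.1 = d.toProd.2 := by
  have hnd := dropLast_nodup hw
  have hlen : w.darts.length = w.support.dropLast.length := by
    rw [w.length_darts, dropLast_length]
  obtain ⟨k, hk, rfl⟩ := List.mem_iff_getElem.mp hd
  have hk' : k < w.support.dropLast.length := hlen ▸ hk
  have hfst : (w.darts[k]'hk).toProd.1 = w.support.dropLast[k]'hk' := by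
    have hm := w.map_fst_darts
    calc (w.darts[k]'hk).toProd.1
        = (w.darts.map (·.toProd.1))[k]'(by simpa using hk) := by
          rw [List.getElem_map]
      _ = w.support.dropLast[k]'hk' := by
          congr 1
  have hsnd : (w.darts[k]'hk).toProd.2
      = w.support[k+1]'(by rw [w.length_support]; rw [w.length_darts] at hk; omega) := by
    have hm := w.map_snd_darts
    calc (w.darts[k]'hk).toProd.2
        = (w.darts.map (·.toProd.2))[k]'(by simpa using hk) := by
          rw [List.getElem_map]
      _ = w.support.tail[k]'(by simp [List.length_tail, w.length_support]; rw [w.length_darts] at hk; omega) := by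
          congr 1
      _ = _ := List.getElem_tail _
  rw [hfst, hsnd, cycPerm, List.formPerm_apply_getElem _ hnd k hk']
  by_cases hlt : k + 1 < w.support.dropLast.length
  · rw [getElem_idx_congr _ (Nat.mod_eq_of_lt hlt),
      getElem_list_congr (support_eq_dropLast w)
        (by rw [w.length_support, ← dropLast_length w]; omega)]
    exact (List.getElem_append_left hlt).symm
  · have hk1 : k + 1 = w.support.dropLast.length := by omega
    have hmod : (k+1) % w.support.dropLast.length = 0 := by rw [hk1, Nat.mod_self]
    rw [getElem_idx_congr _ hmod, dropLast_getElem_zero (by omega),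
      getElem_list_congr (support_eq_dropLast w) (by rw [w.length_support, ← dropLast_length w]; omega),
      List.getElem_append_right (by omega)]
    simp [hk1]

end CycleWalk

section SignedAux

open SimpleGraph Equiv Equiv.Perm Finset Polynomial

variable {V : Type*} [Fintype V] [DecidableEq V]

private def Amat (Γ : SignedGraph V) [DecidableRel Γ.G.Adj] : Matrix V V ℝ :=
  Matrix.of fun i j => if Γ.G.Adj i j then Γ.sign i j else 0

private lemma det_sub_congr {R : Type*} [CommRing R] (N : Matrix V V R) {S T : Finset V}
    (h : S = T) :
    (N.submatrix (Subtype.val : {x : V // x ∉ S} → V) Subtype.val).det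
      = (N.submatrix (Subtype.val : {x : V // x ∉ T} → V) Subtype.val).det := by
  subst h; rfl

variable (Γ : SignedGraph V) [DecidableRel Γ.G.Adj]

private lemma charmatrix_submatrix_val (S : Finset V) :
    Matrix.charmatrix ((Amat Γ).submatrix (Subtype.val : {u : V // u ∉ S} → V) Subtype.val)
      = (Matrix.charmatrix (Amat Γ)).submatrix Subtype.val Subtype.val := by
  refine Matrix.ext fun i j => ?_
  by_cases h : i = j
  · subst h
    simp [Matrix.submatrix_apply]
  · have h' : (i : V) ≠ (j : V) := fun hh => h (Subtype.ext hh)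
    simp [Matrix.submatrix_apply, Matrix.charmatrix_apply_ne _ _ _ h,
      Matrix.charmatrix_apply_ne _ _ _ h']

private lemma phi_eq (S : Finset V) :
    Γ.phi S = ((Matrix.charmatrix (Amat Γ)).submatrix
      (Subtype.val : {u : V // u ∉ S} → V) Subtype.val).det := by
  have h1 : Γ.phi S = (Matrix.charmatrix (Γ.adjOn S)).det := rfl
  have h2 : Γ.adjOn S = (Amat Γ).submatrix (Subtype.val : {u : V // u ∉ S} → V) Subtype.val :=
    rfl
  rw [h1, h2, charmatrix_submatrix_val]

private lemma prod_map_neg {R : Type*} [CommRing R] {α : Type*} (l : List α) (f : α → R) :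
    (l.map fun x => -f x).prod = (-1) ^ l.length * (l.map f).prod := by
  induction l with
  | nil => simp
  | cons a t ih => simp [ih, pow_succ]; ring

private lemma cterm_walk (v : V) (w : Γ.G.Walk v v) (hw : w.IsCycle) :
    cterm (Matrix.charmatrix (Amat Γ)) v (cycPerm w)
      = -(Polynomial.C (Γ.walkSign w) * Γ.phi w.support.toFinset) := by
  have hv_mem : v ∈ w.support.dropLast.toFinset := List.mem_toFinset.mpr (mem_dropLast_v hw)
  have hvset : vset v (cycPerm w) = w.support.dropLast.toFinset := by
    rw [vset, cycPerm_support hw, Finset.insert_eq_self.mpr hv_mem]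
  have hsupf : w.support.toFinset = w.support.dropLast.toFinset := by
    conv_lhs => rw [support_eq_dropLast w]
    rw [List.toFinset_append]
    refine Finset.union_eq_left.mpr ?_
    intro x hx
    rw [List.toFinset_cons, List.toFinset_nil, LawfulSingleton.insert_empty_eq, Finset.mem_singleton] at hx
    rw [hx]; exact hv_mem
  -- sign
  have hcard : (cycPerm w).support.card = w.length := by
    rw [cycPerm_support hw, List.toFinset_card_of_nodup (dropLast_nodup hw), dropLast_length]
  have hsigncast : ((Equiv.Perm.sign (cycPerm w) : ℤ) : Polynomial ℝ)
      = -(-1) ^ w.length := by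
    have hs := (cycPerm_isCycle hw).sign
    rw [hcard] at hs
    rw [hs]
    push_cast
    ring
  -- product
  have hprod : ∏ i ∈ vset v (cycPerm w), Matrix.charmatrix (Amat Γ) (cycPerm w i) i
      = (-1) ^ w.length * Polynomial.C (Γ.walkSign w) := by
    rw [hvset, List.prod_toFinset _ (dropLast_nodup hw), ← w.map_fst_darts, List.map_map]
    have hmapeq : w.darts.map ((fun i => Matrix.charmatrix (Amat Γ) (cycPerm w i) i)
          ∘ (·.toProd.1))
        = w.darts.map (fun d => -Polynomial.C (Γ.sign d.toProd.1 d.toProd.2)) := by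
      refine List.map_congr_left ?_
      intro d hd
      have h1 : cycPerm w d.toProd.1 = d.toProd.2 := cycPerm_dart hw d hd
      have hadj : Γ.G.Adj d.toProd.1 d.toProd.2 := d.adj
      have hne : d.toProd.2 ≠ d.toProd.1 := hadj.ne'
      simp only [Function.comp_apply]
      rw [h1, Matrix.charmatrix_apply_ne _ _ _ hne]
      have hA : Amat Γ d.toProd.2 d.toProd.1 = Γ.sign d.toProd.1 d.toProd.2 := by
        show (if Γ.G.Adj d.toProd.2 d.toProd.1 then Γ.sign d.toProd.2 d.toProd.1 else 0)
          = Γ.sign d.toProd.1 d.toProd.2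
        rw [if_pos hadj.symm, Γ.sign_symm]
      rw [hA]
    rw [hmapeq, prod_map_neg, w.length_darts]
    congr 1
    rw [SignedGraph.walkSign, map_list_prod (Polynomial.C : ℝ →+* Polynomial ℝ),
      List.map_map]
    rfl
  -- det
  have hdet : ((Matrix.charmatrix (Amat Γ)).submatrix
        (Subtype.val : {x : V // x ∉ vset v (cycPerm w)} → V) Subtype.val).det
      = Γ.phi w.support.toFinset := by
    rw [det_sub_congr _ (hvset.trans hsupf.symm), ← phi_eq]
  rw [cterm, hsigncast, hprod, hdet]
  have h1 : ((-1 : Polynomial ℝ) ^ w.length) * (-1) ^ w.length = 1 := by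
    rw [← pow_add]
    exact Even.neg_one_pow ⟨w.length, rfl⟩
  have h2 : (-(-1 : Polynomial ℝ) ^ w.length) * ((-1) ^ w.length
      * Polynomial.C (Γ.walkSign w)) = -Polynomial.C (Γ.walkSign w) := by
    rw [neg_mul, ← mul_assoc, h1, one_mul]
  rw [h2, neg_mul]

end SignedAux

section Construction

open SimpleGraph Equiv Equiv.Perm Finset Polynomial

variable {V : Type*} [Fintype V] [DecidableEq V]
variable (Γ : SignedGraph V) [DecidableRel Γ.G.Adj]

private lemma exists_cycle_walk (v : V) (c : Equiv.Perm V) (hc1 : c.IsCycle)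
    (hc2 : c v ≠ v) (hcard3 : c.support.card ≠ 2)
    (hne : (∏ i ∈ vset v c, Matrix.charmatrix (Amat Γ) (c i) i) ≠ 0) :
    ∃ w : Γ.G.Walk v v, w.IsCycle ∧ cycPerm w = c := by
  have hcyc : c.cycleOf v = c := hc1.cycleOf_eq hc2
  have hvS : v ∈ c.support := mem_support.mpr hc2
  have hadj : ∀ i ∈ c.support, Γ.G.Adj i (c i) := by
    intro i hi
    have hfac : Matrix.charmatrix (Amat Γ) (c i) i ≠ 0 :=
      Finset.prod_ne_zero_iff.mp hne i (mem_insert_of_mem hi)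
    have hnei : c i ≠ i := mem_support.mp hi
    rw [Matrix.charmatrix_apply_ne _ _ _ hnei] at hfac
    by_contra hA
    apply hfac
    have hz : Amat Γ (c i) i = 0 := by
      show (if Γ.G.Adj (c i) i then Γ.sign (c i) i else 0) = 0
      rw [if_neg (fun h => hA h.symm)]
    rw [hz]
    simp
  set l := c.toList v with hl
  have hlen : l.length = c.support.card := by rw [hl, Equiv.Perm.length_toList, hcyc]
  have hlen2 : 2 ≤ l.length := by rw [hlen]; exact hc1.two_le_card_support
  have hlen3 : 3 ≤ l.length := by
    rw [hlen]
    have := hc1.two_le_card_support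
    omega
  have hnodup : l.Nodup := nodup_toList c v
  have hget : ∀ (k : ℕ) (hk : k < l.length), l[k]'hk = (c ^ k) v := by
    intro k hk
    show (c.toList v)[k]'(hl ▸ hk) = (c ^ k) v
    simp [Equiv.Perm.toList, Equiv.Perm.iterate_eq_pow]
  have hmem_supp : ∀ x ∈ l, x ∈ c.support := by
    intro x hx
    rw [hl, mem_toList_iff] at hx
    exact (hx.1.mem_support_iff).mp hx.2
  have horder : c ^ l.length = 1 := by
    rw [hlen, ← hc1.orderOf]
    exact pow_orderOf_eq_one c
  have hlne : l ≠ [] := by intro h; rw [h] at hlen2; simp at hlen2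
  have hadj_pow : ∀ k : ℕ, Γ.G.Adj ((c ^ k) v) ((c ^ (k + 1)) v) := by
    intro k
    have hmem : (c ^ k) v ∈ c.support := pow_apply_mem_support.mpr hvS
    have := hadj _ hmem
    rwa [show c ((c ^ k) v) = (c ^ (k + 1)) v by rw [pow_succ', Equiv.Perm.mul_apply]] at this
  have hchain : (l ++ [v]).Chain' Γ.G.Adj := by
    show List.IsChain Γ.G.Adj (l ++ [v])
    rw [List.isChain_iff_getElem]
    intro i hi
    rw [List.length_append, List.length_singleton] at hi
    have hil : i < l.length := by omega
    have e1 : (l ++ [v]).get ⟨i, by rw [List.length_append, List.length_singleton]; omega⟩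
        = (c ^ i) v := by
      rw [List.get_eq_getElem, List.getElem_append_left hil]
      exact hget i hil
    by_cases h2 : i + 1 < l.length
    · have e2 : (l ++ [v]).get ⟨i + 1, by rw [List.length_append, List.length_singleton]; omega⟩
          = (c ^ (i + 1)) v := by
        rw [List.get_eq_getElem, List.getElem_append_left h2]
        exact hget _ h2
      rw [List.get_eq_getElem] at e1 e2
      rw [e1, e2]
      exact hadj_pow i
    · have hi1 : i + 1 = l.length := by omega
      have e2 : (l ++ [v]).get ⟨i + 1, by rw [List.length_append, List.length_singleton]; omega⟩
          = v := by
        rw [List.get_eq_getElem, List.getElem_append_right (by exact hi1.ge)]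
        simp [hi1]
      rw [List.get_eq_getElem] at e1 e2
      rw [e1, e2]
      have := hadj_pow i
      rwa [show (c ^ (i + 1)) v = v by rw [hi1, horder]; rfl] at this
  obtain ⟨w0, hw0⟩ := exists_walk_of_chain (l ++ [v]) (by simp) hchain
  have hhead : (l ++ [v]).head (by simp) = v := by
    rw [List.head_append_left hlne, List.head_eq_getElem_zero hlne]
    have := hget 0 (by omega)
    simpa using this
  have hlast : (l ++ [v]).getLast (by simp) = v := by
    rw [List.getLast_append_of_right_ne_nil l [v] (by simp)]
    rfl
  set w : Γ.G.Walk v v := (w0.copy hhead hlast) with hwdef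
  have hsup : w.support = l ++ [v] := by rw [hwdef, SimpleGraph.Walk.support_copy, hw0]
  clear_value w
  clear hwdef hw0
  have hLw : w.support.dropLast = l := by rw [hsup, List.dropLast_concat]
  have hcp : cycPerm w = c := by
    rw [cycPerm, hLw, hl, Equiv.Perm.formPerm_toList, hcyc]
  refine ⟨w, ?_, hcp⟩
  -- prove IsCycle
  have hltail : l = v :: l.tail := by
    conv_lhs => rw [← List.cons_head_tail hlne]
    rw [List.head_eq_getElem_zero hlne]
    congr 1
    simpa using hget 0 (by omega)
  have hvnotin : v ∉ l.tail := by
    intro hvt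
    have := hnodup
    rw [hltail, List.nodup_cons] at this
    exact this.1 hvt
  have htail_nodup : l.tail.Nodup := by
    have := hnodup
    rw [hltail, List.nodup_cons] at this
    exact this.2
  have hlt_ne : l.tail ≠ [] := by
    intro h
    have := congrArg List.length h
    rw [List.length_tail] at this
    simp at this
    omega
  have hltt_ne : l.tail.tail ≠ [] := by
    intro h
    have := congrArg List.length h
    rw [List.length_tail, List.length_tail] at this
    simp at this
    omega
  cases w with
  | nil =>
    exfalso
    have := congrArg List.length hsup
    rw [SimpleGraph.Walk.support_nil, List.length_append, List.length_singleton] at this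
    omega
  | @cons _ b _ hvb q =>
    have hsup' := hsup
    rw [SimpleGraph.Walk.support_cons] at hsup'
    conv_rhs at hsup' => rw [hltail]
    simp only [List.cons_append, List.cons.injEq, true_and] at hsup'
    -- hsup' : q.support = l.tail ++ [v]
    have hq_nodup : q.support.Nodup := by
      rw [hsup', List.nodup_append]
      refine ⟨htail_nodup, by simp, ?_⟩
      intro a ha b hb
      rw [List.mem_singleton] at hb
      intro hab
      exact hvnotin (by rw [← hb, ← hab]; exact ha)
    rw [SimpleGraph.Walk.cons_isCycle_iff]
    refine ⟨(SimpleGraph.Walk.isPath_def q).mpr hq_nodup, ?_⟩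
    intro hmem
    rw [SimpleGraph.Walk.edges] at hmem
    obtain ⟨d, hd, hedge⟩ := List.mem_map.mp hmem
    have hedge' : s(d.toProd.1, d.toProd.2) = s(v, b) := hedge
    rw [Sym2.eq_iff] at hedge'
    rcases hedge' with ⟨h1, _⟩ | ⟨h1, h2⟩
    · -- first coordinate is v, but v is not among the dart heads of q
      have hv1 : d.toProd.1 ∈ q.darts.map (·.fst) := List.mem_map_of_mem hd
      rw [h1, SimpleGraph.Walk.map_fst_darts, hsup', List.dropLast_concat] at hv1
      exact hvnotin hv1
    · -- dart (b, v) in q; by nodup structure the second vertex after b must be v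
      obtain ⟨t, hst⟩ := dart_head_structure q hq_nodup d hd h1
      rw [h2] at hst
      -- q.support = b :: v :: t  but also  = l.tail ++ [v]
      rw [hsup'] at hst
      conv_lhs at hst => rw [← List.cons_head_tail hlt_ne]
      simp only [List.cons_append, List.cons.injEq] at hst
      have hst2 : l.tail.tail ++ [v] = v :: t := hst.2
      have hb0 : 0 < l.tail.tail.length := List.length_pos_iff.mpr hltt_ne
      have h0 : (l.tail.tail ++ [v])[0]'(by rw [List.length_append]; omega) = v := by
        rw [getElem_list_congr hst2]
        simp
      rw [List.getElem_append_left hb0, List.getElem_tail, List.getElem_tail] at h0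
      have hv0 : l[0]'(by omega) = v := by
        have h00 := hget 0 (by omega)
        rwa [pow_zero, Equiv.Perm.one_apply] at h00
      have h20 : l[0 + 1 + 1]'(by omega) = l[0]'(by omega) := by rw [h0, hv0]
      have : 0 + 1 + 1 = 0 := (List.Nodup.getElem_inj_iff hnodup).mp h20
      omega

end Construction

section Main

open SimpleGraph Equiv Equiv.Perm Finset Polynomial
open scoped Classical

variable {V : Type*} [Fintype V] [DecidableEq V]
variable (Γ : SignedGraph V) [DecidableRel Γ.G.Adj]

private lemma cterm_swap (v u : V) (huv : u ≠ v) :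
    cterm (Matrix.charmatrix (Amat Γ)) v (Equiv.swap v u)
      = if Γ.G.Adj v u then -(Γ.phi {v, u}) else 0 := by
  have hvu : v ≠ u := huv.symm
  have hvset : vset v (Equiv.swap v u) = {v, u} := by
    rw [vset, Equiv.Perm.support_swap hvu]
    exact Finset.insert_idem v {u}
  rw [cterm, det_sub_congr _ hvset, ← phi_eq, hvset]
  have hprod : ∏ i ∈ ({v, u} : Finset V), Matrix.charmatrix (Amat Γ) (Equiv.swap v u i) i
      = Matrix.charmatrix (Amat Γ) u v * Matrix.charmatrix (Amat Γ) v u := by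
    rw [show ({v, u} : Finset V) = insert v {u} from rfl,
      Finset.prod_insert (by simp [hvu]), Finset.prod_singleton,
      Equiv.swap_apply_left, Equiv.swap_apply_right]
  rw [hprod, Equiv.Perm.sign_swap hvu]
  by_cases hadj : Γ.G.Adj v u
  · rw [if_pos hadj]
    have h1 : Matrix.charmatrix (Amat Γ) u v = -Polynomial.C (Γ.sign v u) := by
      rw [Matrix.charmatrix_apply_ne _ _ _ huv]
      have hz : Amat Γ u v = Γ.sign v u := by
        show (if Γ.G.Adj u v then Γ.sign u v else 0) = Γ.sign v u
        rw [if_pos hadj.symm, Γ.sign_symm]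
      rw [hz]
    have h2 : Matrix.charmatrix (Amat Γ) v u = -Polynomial.C (Γ.sign v u) := by
      rw [Matrix.charmatrix_apply_ne _ _ _ hvu]
      have hz : Amat Γ v u = Γ.sign v u := by
        show (if Γ.G.Adj v u then Γ.sign v u else 0) = Γ.sign v u
        rw [if_pos hadj]
      rw [hz]
    have hsq : Γ.sign v u * Γ.sign v u = 1 := by
      rcases Γ.sign_pm v u hadj with h | h <;> rw [h] <;> norm_num
    have hCC : (-Polynomial.C (Γ.sign v u)) * (-Polynomial.C (Γ.sign v u)) = 1 := by
      rw [neg_mul_neg, ← Polynomial.C_mul, hsq, Polynomial.C_1]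
    rw [h1, h2, hCC]
    push_cast
    ring
  · rw [if_neg hadj]
    have h2 : Matrix.charmatrix (Amat Γ) v u = 0 := by
      rw [Matrix.charmatrix_apply_ne _ _ _ hvu]
      have hz : Amat Γ v u = 0 := by
        show (if Γ.G.Adj v u then Γ.sign v u else 0) = 0
        rw [if_neg hadj]
      rw [hz, map_zero, neg_zero]
    rw [h2]
    ring

theorem signedGraph_charpoly_vertex_recurrence'
    (v : V) :
    Γ.phi ∅ = Polynomial.X * Γ.phi {v}
      - ∑ u ∈ Γ.G.neighborFinset v, Γ.phi {v, u}
      - ∑ w : {w : Γ.G.Walk v v // w.IsCycle},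
          Polynomial.C (Γ.walkSign w.1) * Γ.phi w.1.support.toFinset := by
  have h0 : Γ.phi ∅ = (Matrix.charmatrix (Amat Γ)).det := by
    rw [phi_eq Γ ∅]
    exact Matrix.det_submatrix_equiv_self
      (Equiv.subtypeUnivEquiv (fun x => Finset.notMem_empty x)) _
  set M := Matrix.charmatrix (Amat Γ) with hM
  rw [h0, det_expansion M v]
  set T := Finset.univ.filter (fun c : Equiv.Perm V => c = 1 ∨ (c.IsCycle ∧ c v ≠ v)) with hT
  rw [← Finset.sum_filter_add_sum_filter_not T (fun c => c = 1) (cterm M v)]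
  have hT1 : T.filter (fun c => c = 1) = {1} := by
    ext c
    simp only [hT, Finset.mem_filter, Finset.mem_univ, true_and, Finset.mem_singleton]
    constructor
    · rintro ⟨_, h⟩; exact h
    · rintro rfl; exact ⟨Or.inl rfl, rfl⟩
  have hid : cterm M v 1 = Polynomial.X * Γ.phi {v} := by
    have hv1 : vset v (1 : Equiv.Perm V) = {v} := by
      rw [vset, Equiv.Perm.support_one]
      rfl
    have hAvv : Amat Γ v v = 0 := by
      show (if Γ.G.Adj v v then Γ.sign v v else 0) = 0
      rw [if_neg (Γ.G.irrefl)]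
    rw [cterm, det_sub_congr M hv1, ← phi_eq, hv1, Finset.prod_singleton,
      Equiv.Perm.one_apply, hM, Matrix.charmatrix_apply_eq, hAvv, map_zero, sub_zero,
      Equiv.Perm.sign_one]
    push_cast
    ring
  rw [hT1, Finset.sum_singleton, hid]
  -- split the rest by cycle length 2 / ≥ 3
  rw [← Finset.sum_filter_add_sum_filter_not (T.filter (fun c => ¬c = 1))
    (fun c => c.support.card = 2) (cterm M v)]
  -- transposition part
  have hS2 : (T.filter (fun c => ¬c = 1)).filter (fun c => c.support.card = 2)
      = Finset.image (fun u => Equiv.swap v u) (Finset.univ.erase v) := by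
    ext c
    simp only [hT, Finset.mem_filter, Finset.mem_univ, true_and, Finset.mem_image,
      Finset.mem_erase]
    constructor
    · rintro ⟨⟨hP, hne1⟩, hcard⟩
      rcases hP with rfl | ⟨_, hmove⟩
      · exact absurd rfl hne1
      · obtain ⟨x, y, hxy, rfl⟩ := Equiv.Perm.card_support_eq_two.mp hcard
        by_cases hvx : v = x
        · subst hvx
          exact ⟨y, ⟨fun h => by subst h; simp [Equiv.swap_apply_left] at hmove, trivial⟩, rfl⟩
        · have hvy : v = y := by
            by_contra hvy
            exact hmove (Equiv.swap_apply_of_ne_of_ne hvx hvy)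
          subst hvy
          exact ⟨x, ⟨fun h => by subst h; simp [Equiv.swap_apply_right] at hmove, trivial⟩,
            (Equiv.swap_comm v x)⟩
    · rintro ⟨u, ⟨huv, _⟩, rfl⟩
      have hvu : v ≠ u := fun h => huv h.symm
      refine ⟨⟨Or.inr ⟨Equiv.Perm.isCycle_swap hvu, ?_⟩, ?_⟩, Equiv.Perm.card_support_swap hvu⟩
      · rw [Equiv.swap_apply_left]; exact huv
      · intro h1
        have h2 := congrArg (fun σ : Equiv.Perm V => σ v) h1
        simp only [Equiv.swap_apply_left, Equiv.Perm.one_apply] at h2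
        exact huv h2
  have hinj : ∀ u₁ ∈ Finset.univ.erase v, ∀ u₂ ∈ Finset.univ.erase v,
      Equiv.swap v u₁ = Equiv.swap v u₂ → u₁ = u₂ := by
    intro u₁ _ u₂ _ h
    have h2 := congrArg (fun σ : Equiv.Perm V => σ v) h
    simpa [Equiv.swap_apply_left] using h2
  have hsub : Γ.G.neighborFinset v ⊆ Finset.univ.erase v := by
    intro u hu
    rw [SimpleGraph.mem_neighborFinset] at hu
    exact Finset.mem_erase.mpr ⟨hu.ne', Finset.mem_univ u⟩
  have hswap_sum : ∑ c ∈ (T.filter (fun c => ¬c = 1)).filter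
        (fun c => c.support.card = 2), cterm M v c
      = -∑ u ∈ Γ.G.neighborFinset v, Γ.phi {v, u} := by
    rw [hS2, Finset.sum_image hinj]
    have e1 : ∑ u ∈ Finset.univ.erase v, cterm M v (Equiv.swap v u)
        = ∑ u ∈ Γ.G.neighborFinset v, cterm M v (Equiv.swap v u) := by
      refine (Finset.sum_subset hsub ?_).symm
      intro u hu hnu
      rw [SimpleGraph.mem_neighborFinset] at hnu
      rw [cterm_swap Γ v u (Finset.mem_erase.mp hu).1, if_neg hnu]
    rw [e1]
    rw [← Finset.sum_neg_distrib]
    refine Finset.sum_congr rfl fun u hu => ?_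
    rw [SimpleGraph.mem_neighborFinset] at hu
    rw [cterm_swap Γ v u hu.ne', if_pos hu]
  rw [hswap_sum]
  -- cycle part
  have hcyc_sum : ∑ c ∈ (T.filter (fun c => ¬c = 1)).filter
        (fun c => ¬c.support.card = 2), cterm M v c
      = ∑ w : {w : Γ.G.Walk v v // w.IsCycle},
          -(Polynomial.C (Γ.walkSign w.1) * Γ.phi w.1.support.toFinset) := by
    have hex : ∀ c ∈ (T.filter (fun c => ¬c = 1)).filter (fun c => ¬c.support.card = 2),
        cterm M v c ≠ 0 → ∃ w : {w : Γ.G.Walk v v // w.IsCycle}, cycPerm w.1 = c := by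
      intro c hc hnz
      rw [Finset.mem_filter, Finset.mem_filter, hT, Finset.mem_filter] at hc
      obtain ⟨⟨⟨-, hP⟩, hne1⟩, hcard⟩ := hc
      rcases hP with rfl | ⟨hcyc, hmove⟩
      · exact absurd rfl hne1
      · have hprodne : (∏ i ∈ vset v c, M (c i) i) ≠ 0 := by
          intro h
          apply hnz
          rw [cterm, h, mul_zero, zero_mul]
        obtain ⟨w, hwc, hcp⟩ := exists_cycle_walk Γ v c hcyc hmove hcard hprodne
        exact ⟨⟨w, hwc⟩, hcp⟩
    refine Finset.sum_bij_ne_zero (fun c hc hnz => (hex c hc hnz).choose)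
      (fun _ _ _ => Finset.mem_univ _) ?_ ?_ ?_
    · intro a₁ h11 h12 a₂ h21 h22 heq
      rw [← (hex a₁ h11 h12).choose_spec, ← (hex a₂ h21 h22).choose_spec]
      exact congrArg (fun w : {w : Γ.G.Walk v v // w.IsCycle} => cycPerm w.1) heq
    · intro b _ hgb
      have hb3 : 3 ≤ (cycPerm b.1).support.card := by
        rw [cycPerm_support b.2, List.toFinset_card_of_nodup (dropLast_nodup b.2),
          dropLast_length]
        exact b.2.three_le_length
      have hmemb : cycPerm b.1 ∈ (T.filter (fun c => ¬c = 1)).filter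
          (fun c => ¬c.support.card = 2) := by
        rw [Finset.mem_filter, Finset.mem_filter, hT, Finset.mem_filter]
        refine ⟨⟨⟨Finset.mem_univ _, Or.inr ⟨cycPerm_isCycle b.2, cycPerm_moves b.2⟩⟩, ?_⟩, ?_⟩
        · intro h1
          exact cycPerm_moves b.2 (by rw [h1]; rfl)
        · omega
      have hfne : cterm M v (cycPerm b.1) ≠ 0 := by
        rw [hM, cterm_walk Γ v b.1 b.2]
        exact hgb
      refine ⟨cycPerm b.1, hmemb, hfne, ?_⟩
      have hspec := (hex (cycPerm b.1) hmemb hfne).choose_spec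
      exact Subtype.ext (cycPerm_injective
        ((hex (cycPerm b.1) hmemb hfne).choose).2 b.2 hspec)
    · intro a h₁ h₂
      have hspec := (hex a h₁ h₂).choose_spec
      exact (congrArg (cterm M v) hspec.symm).trans
        (cterm_walk Γ v _ ((hex a h₁ h₂).choose).2)
  rw [hcyc_sum, Finset.sum_neg_distrib]
  ring

end Main

/-- The recurrence of Gill and Acharya for the characteristic polynomial of a signed
graph with respect to a vertex `v`:
`φ_G(x) = x·φ_{G−v}(x) − Σ_{vu ∈ E} φ_{G−v−u}(x) − 2·Σ_{C ∈ C(v)} σ(C)·φ_{G−C}(x)`.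
Here the sum over undirected cycles `C` through `v`, each counted with coefficient 2,
is expressed as the sum over closed walks at `v` that are cycles (each undirected cycle
corresponds to exactly two such walks, one per orientation, with the same sign and
the same vertex set). -/
theorem signedGraph_charpoly_vertex_recurrence
    (Γ : SignedGraph V) [DecidableRel Γ.G.Adj] (v : V) :
    Γ.phi ∅ = Polynomial.X * Γ.phi {v}
      - ∑ u ∈ Γ.G.neighborFinset v, Γ.phi {v, u}
      - ∑ w : {w : Γ.G.Walk v v // w.IsCycle},
          Polynomial.C (Γ.walkSign w.1) * Γ.phi w.1.support.toFinset :=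
  signedGraph_charpoly_vertex_recurrence' Γ v
end
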